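/- arXiv:2509.04749 — 2 statements merged into one kernel-verified Lean document; each statement's English description precedes it below -/
import Mathlib

section
/- Let β > 0 and c ∈ (0,1), and for each α ∈ [0,1) let (x*(α), θ*(α)) be the unique pair satisfying Φ(√β·(θ*(α) − x*(α))) = c and θ*(α) = α + (1 − α)·Φ(√β·(x*(α) − θ*(α))). Then both α ↦ x*(α) and α ↦ θ*(α) are strictly increasing on [0,1): an increase in the mass of partisans raises both the citizens' attack threshold and the regime's collapse threshold. -/
open Real Set MeasureTheory

/-- The standard normal density `φ(t) = exp(−t²/2)/√(2π)`. -/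
noncomputable def stdNormalPDF (t : ℝ) : ℝ :=
  Real.exp (-(t ^ 2) / 2) / Real.sqrt (2 * Real.pi)

/-- The standard normal cumulative distribution function `Φ`. -/
noncomputable def stdNormalCDF (x : ℝ) : ℝ :=
  ∫ t in Set.Iic x, stdNormalPDF t

/-!
Since `Φ` is injective, the citizens' indifference condition pins down the gap
`θ*(α) − x*(α) = k` independently of `α`. The regime's condition then reads
`θ*(α) = d + α (1 − d)` with the constant `d = Φ(−√β k) < 1`, which is strictly increasing,
and `x*(α) = θ*(α) − k` inherits this.
-/

lemma stdNormalPDF_eq_gaussianPDFReal : stdNormalPDF = ProbabilityTheory.gaussianPDFReal 0 1 := by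
  ext t
  simp [stdNormalPDF, ProbabilityTheory.gaussianPDFReal, div_eq_inv_mul]

lemma stdNormalPDF_pos (t : ℝ) : 0 < stdNormalPDF t := by
  rw [stdNormalPDF_eq_gaussianPDFReal]
  exact ProbabilityTheory.gaussianPDFReal_pos 0 1 t one_ne_zero

lemma integrable_stdNormalPDF : Integrable stdNormalPDF := by
  rw [stdNormalPDF_eq_gaussianPDFReal]
  exact ProbabilityTheory.integrable_gaussianPDFReal 0 1

lemma integral_stdNormalPDF : ∫ t, stdNormalPDF t = 1 := by
  rw [stdNormalPDF_eq_gaussianPDFReal]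
  exact ProbabilityTheory.integral_gaussianPDFReal_eq_one 0 one_ne_zero

lemma stdNormalCDF_strictMono : StrictMono stdNormalCDF := by
  intro a b hab
  have hint := integrable_stdNormalPDF
  have hdiff : stdNormalCDF b - stdNormalCDF a = ∫ t in a..b, stdNormalPDF t :=
    intervalIntegral.integral_Iic_sub_Iic hint.integrableOn hint.integrableOn
  have hpos : 0 < ∫ t in a..b, stdNormalPDF t :=
    intervalIntegral.intervalIntegral_pos_of_pos hint.intervalIntegrable stdNormalPDF_pos hab
  linarith

lemma stdNormalCDF_lt_one (x : ℝ) : stdNormalCDF x < 1 := by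
  have hint := integrable_stdNormalPDF
  have hsplit : stdNormalCDF x + ∫ t in Ioi x, stdNormalPDF t = 1 := by
    rw [stdNormalCDF, intervalIntegral.integral_Iic_add_Ioi hint.integrableOn hint.integrableOn,
      integral_stdNormalPDF]
  have htail : 0 < ∫ t in Ioi x, stdNormalPDF t := by
    rw [setIntegral_pos_iff_support_of_nonneg_ae
      (ae_of_all _ fun t => (stdNormalPDF_pos t).le) hint.integrableOn]
    simp [Function.support, (stdNormalPDF_pos _).ne']
  linarith

theorem equilibrium_thresholds_strictMono_in_partisans_general
    (β c : ℝ) (hβ : 0 < β)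
    (xs ts : ℝ → ℝ)
    (hcit : ∀ α ∈ Set.Ico (0 : ℝ) 1, stdNormalCDF (Real.sqrt β * (ts α - xs α)) = c)
    (hreg : ∀ α ∈ Set.Ico (0 : ℝ) 1,
      ts α = α + (1 - α) * stdNormalCDF (Real.sqrt β * (xs α - ts α))) :
    StrictMonoOn xs (Set.Ico (0 : ℝ) 1) ∧ StrictMonoOn ts (Set.Ico (0 : ℝ) 1) := by
  have h0 : (0 : ℝ) ∈ Ico (0 : ℝ) 1 := ⟨le_rfl, one_pos⟩
  have hgap : ∀ α ∈ Ico (0 : ℝ) 1, ts α - xs α = ts 0 - xs 0 := fun α hα =>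
    mul_left_cancel₀ (Real.sqrt_pos.mpr hβ).ne'
      (stdNormalCDF_strictMono.injective ((hcit α hα).trans (hcit 0 h0).symm))
  set d := stdNormalCDF (Real.sqrt β * (xs 0 - ts 0))
  have hts : ∀ α ∈ Ico (0 : ℝ) 1, ts α = d + α * (1 - d) := fun α hα => by
    rw [hreg α hα, show xs α - ts α = xs 0 - ts 0 by linarith [hgap α hα]]
    ring
  have hts_mono : StrictMonoOn ts (Ico (0 : ℝ) 1) := fun a ha b hb hab => by
    rw [hts a ha, hts b hb]
    have : 0 < 1 - d := sub_pos.mpr (stdNormalCDF_lt_one _)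
    gcongr
  refine ⟨fun a ha b hb hab => ?_, hts_mono⟩
  linarith [hts_mono ha hb hab, hgap a ha, hgap b hb]

/-- If `(x*(α), θ*(α))` is the (unique) equilibrium pair for each
`α ∈ [0,1)`, then both `α ↦ x*(α)` and `α ↦ θ*(α)` are strictly increasing on `[0,1)`. -/
theorem equilibrium_thresholds_strictMono_in_partisans
    (β c : ℝ) (hβ : 0 < β) (hc : c ∈ Set.Ioo (0 : ℝ) 1)
    (xs ts : ℝ → ℝ)
    (hcit : ∀ α ∈ Set.Ico (0 : ℝ) 1, stdNormalCDF (Real.sqrt β * (ts α - xs α)) = c)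
    (hreg : ∀ α ∈ Set.Ico (0 : ℝ) 1,
      ts α = α + (1 - α) * stdNormalCDF (Real.sqrt β * (xs α - ts α))) :
    StrictMonoOn xs (Set.Ico (0 : ℝ) 1) ∧ StrictMonoOn ts (Set.Ico (0 : ℝ) 1) :=
  equilibrium_thresholds_strictMono_in_partisans_general β c hβ xs ts hcit hreg
end

section
/- The functions r ↦ θ*(r) = 1 + r − (1/2)·√(1 + 4r²) and r ↦ α*(r) = 1 + 2r − √(1 + 4r²) are strictly increasing on (0, ∞), with θ*(r) ∈ (1/2, 1) and α*(r) ∈ (0,1) for all r > 0. Hence in the c = 1/2 equilibrium, both the regime's collapse threshold θ* and the citizens' threshold x* = θ* are strictly increasing in the benefit-cost ratio B/ψ. -/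
/-!
Both thresholds are affine in `α*(r) = 1 + 2r − √(1 + 4r²)`, namely `θ* = (1 + α*) / 2`, so
everything reduces to `α*`. Since `|2r| < √(1 + 4r²)`, the map `r ↦ √(1 + 4r²)` is strictly
`2`-Lipschitz: `(t − s)(t + s) = 4(b − a)(b + a) < 2(b − a)(t + s)` for `s = √(1 + 4a²)`,
`t = √(1 + 4b²)`, `a < b`. Hence `α*` is strictly increasing on all of `ℝ`. Finally
`2r < √(1 + 4r²) < 1 + 2r` for `r > 0` places `α*(r)` in `(0, 1)`.
-/

open Real Set

noncomputable def criticalShare (r : ℝ) : ℝ := 1 + 2 * r - √(1 + 4 * r ^ 2)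

noncomputable def regimeThreshold (r : ℝ) : ℝ := 1 + r - 1 / 2 * √(1 + 4 * r ^ 2)

lemma two_mul_lt_sqrt_one_add_four_mul_sq (r : ℝ) : 2 * r < √(1 + 4 * r ^ 2) := by
  calc 2 * r ≤ |2 * r| := le_abs_self _
    _ = √((2 * r) ^ 2) := (sqrt_sq_eq_abs _).symm
    _ < √(1 + 4 * r ^ 2) := sqrt_lt_sqrt (sq_nonneg _) (by linarith)

lemma sqrt_one_add_four_mul_sq_lt_one_add_two_mul {r : ℝ} (hr : 0 < r) :
    √(1 + 4 * r ^ 2) < 1 + 2 * r :=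
  (sqrt_lt' (by linarith)).mpr (by nlinarith)

lemma sqrt_one_add_four_mul_sq_sub_lt {a b : ℝ} (hab : a < b) :
    √(1 + 4 * b ^ 2) - √(1 + 4 * a ^ 2) < 2 * (b - a) := by
  set s := √(1 + 4 * a ^ 2)
  set t := √(1 + 4 * b ^ 2)
  have hs : s ^ 2 = 1 + 4 * a ^ 2 := sq_sqrt (by positivity)
  have ht : t ^ 2 = 1 + 4 * b ^ 2 := sq_sqrt (by positivity)
  have has := two_mul_lt_sqrt_one_add_four_mul_sq a
  have hbt := two_mul_lt_sqrt_one_add_four_mul_sq b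
  have hst : 0 < s + t := add_pos_of_nonneg_of_pos (sqrt_nonneg _) (sqrt_pos.2 (by positivity))
  have hprod : (t - s) * (s + t) < 2 * (b - a) * (s + t) := by
    nlinarith [mul_pos (sub_pos.2 hab) hst]
  exact lt_of_mul_lt_mul_right hprod hst.le

lemma strictMono_criticalShare : StrictMono criticalShare := fun a b hab => by
  have := sqrt_one_add_four_mul_sq_sub_lt hab
  simp only [criticalShare]
  linarith

lemma criticalShare_mem_Ioo {r : ℝ} (hr : 0 < r) : criticalShare r ∈ Ioo 0 1 := by
  have hlo := two_mul_lt_sqrt_one_add_four_mul_sq r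
  have hhi := sqrt_one_add_four_mul_sq_lt_one_add_two_mul hr
  constructor <;> simp only [criticalShare] <;> linarith

lemma regimeThreshold_eq (r : ℝ) : regimeThreshold r = (1 + criticalShare r) / 2 := by
  simp only [regimeThreshold, criticalShare]
  ring

lemma strictMono_regimeThreshold : StrictMono regimeThreshold := fun a b hab => by
  have := strictMono_criticalShare hab
  rw [regimeThreshold_eq, regimeThreshold_eq]
  linarith

lemma regimeThreshold_mem_Ioo {r : ℝ} (hr : 0 < r) : regimeThreshold r ∈ Ioo (1 / 2) 1 := by
  obtain ⟨hlo, hhi⟩ := criticalShare_mem_Ioo hr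
  rw [regimeThreshold_eq]
  constructor <;> linarith

/-- `θ*(r) = 1 + r − ½√(1 + 4r²)` and `α*(r) = 1 + 2r − √(1 + 4r²)`
are strictly increasing on `(0, ∞)`, with `θ*(r) ∈ (1/2, 1)` and `α*(r) ∈ (0,1)` for
all `r > 0`; hence in the `c = 1/2` equilibrium both the regime threshold `θ*` and the
citizen threshold `x* = θ*` strictly increase in the benefit-cost ratio. -/
theorem thresholds_monotone_in_benefit_cost_ratio :
    StrictMonoOn (fun r : ℝ => 1 + r - 1 / 2 * Real.sqrt (1 + 4 * r ^ 2))
      (Set.Ioi (0 : ℝ)) ∧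
    StrictMonoOn (fun r : ℝ => 1 + 2 * r - Real.sqrt (1 + 4 * r ^ 2))
      (Set.Ioi (0 : ℝ)) ∧
    (∀ r : ℝ, 0 < r →
      (1 + r - 1 / 2 * Real.sqrt (1 + 4 * r ^ 2)) ∈ Set.Ioo (1 / 2 : ℝ) 1) ∧
    (∀ r : ℝ, 0 < r →
      (1 + 2 * r - Real.sqrt (1 + 4 * r ^ 2)) ∈ Set.Ioo (0 : ℝ) 1) :=
  ⟨strictMono_regimeThreshold.strictMonoOn _, strictMono_criticalShare.strictMonoOn _,
    fun _ => regimeThreshold_mem_Ioo, fun _ => criticalShare_mem_Ioo⟩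
end
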